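/- Let T = convexHull{(0,0), (2,0), (0,1)} ⊆ ℝ² (a right triangle with side lengths 1, 2, √5). Define the five triangles T₁ = convexHull{(0,0), (1,0), (1/5, 2/5)}, T₂ = convexHull{(1/5, 2/5), (1,0), (2/5, 4/5)}, T₃ = convexHull{(2/5, 4/5), (1,0), (6/5, 2/5)}, T₄ = convexHull{(0,0), (0,1), (2/5, 4/5)}, and T₅ = convexHull{(1,0), (2,0), (6/5, 2/5)}. Then: (i) T = T₁ ∪ T₂ ∪ T₃ ∪ T₄ ∪ T₅; (ii) the interiors of T₁, …, T₅ are pairwise disjoint; and (iii) for each i = 1, …, 5 there exists a map fᵢ : ℝ² → ℝ² satisfying dist(fᵢ(x), fᵢ(y)) = dist(x,y)/√5 for all x, y ∈ ℝ² and fᵢ(T) = Tᵢ. In particular, the 1 : 2 : √5 right triangle can be partitioned into five right triangles with the same proportions. -/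

import Mathlib

/-!
Each piece `Tᵢ` is the image of `T` under an explicit map `x ↦ M x + c` with `Mᵀ M = I / 5`,
which therefore multiplies all distances by `1 / √5`. The four lines `y = 2x`, `x + 2y = 1`,
`4x + 3y = 4` and `2x - y = 2` cut `T` into the five pieces: on each region the barycentric
coordinates of a point with respect to the corresponding piece are nonnegative, and any two
pieces lie in opposite closed half-planes of one of these lines. A nonzero linear functional
is an open map, so the interior of a set in a closed half-plane lies in the open half-plane,
and the interiors are disjoint.
-/

/-- A point of the Euclidean plane given by its two coordinates. -/
noncomputable def pt (a b : ℝ) : EuclideanSpace ℝ (Fin 2) := WithLp.toLp 2 ![a, b]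

/-- The `1 : 2 : √5` right triangle `T = convexHull {(0,0), (2,0), (0,1)}`. -/
noncomputable def Tri : Set (EuclideanSpace ℝ (Fin 2)) :=
  convexHull ℝ {pt 0 0, pt 2 0, pt 0 1}

/-- The five sub-triangles `T₁, …, T₅` of the pinwheel subdivision of `T`. -/
noncomputable def Tsub : Fin 5 → Set (EuclideanSpace ℝ (Fin 2)) :=
  ![convexHull ℝ {pt 0 0, pt 1 0, pt (1/5) (2/5)},
    convexHull ℝ {pt (1/5) (2/5), pt 1 0, pt (2/5) (4/5)},
    convexHull ℝ {pt (2/5) (4/5), pt 1 0, pt (6/5) (2/5)},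
    convexHull ℝ {pt 0 0, pt 0 1, pt (2/5) (4/5)},
    convexHull ℝ {pt 1 0, pt 2 0, pt (6/5) (2/5)}]

open scoped RealInnerProductSpace

local notation "ℝ²" => EuclideanSpace ℝ (Fin 2)

section Triple

variable {𝕜 E : Type*} [Field 𝕜] [LinearOrder 𝕜] [IsStrictOrderedRing 𝕜] [AddCommGroup E]
  [Module 𝕜 E]

theorem mem_convexHull_triple_iff {p q r x : E} :
    x ∈ convexHull 𝕜 {p, q, r} ↔
      ∃ a b c : 𝕜, 0 ≤ a ∧ 0 ≤ b ∧ 0 ≤ c ∧ a + b + c = 1 ∧ a • p + b • q + c • r = x := by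
  constructor
  · rw [convexHull_insert (Set.insert_nonempty q {r}), convexJoin_singleton_left, convexHull_pair]
    simp only [Set.mem_iUnion, exists_prop]
    rintro ⟨_, ⟨s, t, hs, ht, hst, rfl⟩, u, w, hu, hw, huw, rfl⟩
    refine ⟨u, w * s, w * t, hu, by positivity, by positivity,
      by linear_combination w * hst + huw, ?_⟩
    rw [smul_add, smul_smul, smul_smul, add_assoc]
  · rintro ⟨a, b, c, ha, hb, hc, habc, rfl⟩
    simpa [Fin.sum_univ_three] using (convex_convexHull 𝕜 {p, q, r}).sum_mem (t := Finset.univ)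
      (w := ![a, b, c]) (z := ![p, q, r]) (by simp [Fin.forall_fin_succ, ha, hb, hc])
      (by simp [Fin.sum_univ_three, habc]) (fun i _ => subset_convexHull 𝕜 _ (by fin_cases i <;> simp))

end Triple

theorem disjoint_interior_convexHull_of_separated {E : Type*} [AddCommGroup E]
    [TopologicalSpace E] [IsTopologicalAddGroup E] [Module ℝ E] [ContinuousSMul ℝ E]
    (f : StrongDual ℝ E) (hf : f ≠ 0) {s t : Set E} {k : ℝ} (hs : ∀ x ∈ s, f x ≤ k)
    (ht : ∀ x ∈ t, k ≤ f x) :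
    Disjoint (interior (convexHull ℝ s)) (interior (convexHull ℝ t)) := by
  have hs' : interior (convexHull ℝ s) ⊆ f ⁻¹' Set.Iio k := by
    rw [← interior_Iic,
      (f.isOpenMap_of_ne_zero hf).preimage_interior_eq_interior_preimage f.continuous]
    exact interior_mono ((convex_halfSpace_le f.isLinear k).convexHull_subset_iff.2 hs)
  have ht' : interior (convexHull ℝ t) ⊆ f ⁻¹' Set.Ici k :=
    interior_subset.trans ((convex_halfSpace_ge f.isLinear k).convexHull_subset_iff.2 ht)
  exact ((Set.Iio_disjoint_Ici le_rfl).preimage f).mono hs' ht'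

section Matrix

variable {n : Type*} [Fintype n] [DecidableEq n] {M : Matrix n n ℝ} {r : ℝ}

theorem norm_toEuclideanLin_apply (hr : 0 ≤ r) (hM : M.transpose * M = r ^ 2 • 1)
    (v : EuclideanSpace ℝ n) : ‖M.toEuclideanLin v‖ = r * ‖v‖ := by
  refine (pow_left_inj₀ (norm_nonneg _) (by positivity) two_ne_zero).1 ?_
  rw [mul_pow, ← real_inner_self_eq_norm_sq, ← real_inner_self_eq_norm_sq,
    EuclideanSpace.inner_eq_star_dotProduct, EuclideanSpace.inner_eq_star_dotProduct]
  simp only [Matrix.ofLp_toLpLin, Matrix.toLin'_apply, star_trivial, Matrix.dotProduct_mulVec]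
  rw [← Matrix.mulVec_transpose, Matrix.mulVec_mulVec, hM]
  simp [Matrix.smul_mulVec, smul_dotProduct]

theorem dist_toEuclideanLin_add (hr : 0 ≤ r) (hM : M.transpose * M = r ^ 2 • 1)
    (c x y : EuclideanSpace ℝ n) :
    dist (M.toEuclideanLin x + c) (M.toEuclideanLin y + c) = r * dist x y := by
  rw [dist_add_right, dist_eq_norm, dist_eq_norm, ← map_sub, norm_toEuclideanLin_apply hr hM]

end Matrix

@[simp] lemma pt_apply_zero (a b : ℝ) : pt a b 0 = a := rfl

@[simp] lemma pt_apply_one (a b : ℝ) : pt a b 1 = b := rfl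

lemma pt_eta (x : ℝ²) : pt (x 0) (x 1) = x := by
  ext i; fin_cases i <;> rfl

@[simp] lemma pt_add_pt (a b c d : ℝ) : pt a b + pt c d = pt (a + c) (b + d) := by
  ext i; fin_cases i <;> rfl

@[simp] lemma smul_pt (t a b : ℝ) : t • pt a b = pt (t * a) (t * b) := by
  ext i; fin_cases i <;> rfl

@[simp] lemma toEuclideanLin_pt (a b c d u v : ℝ) :
    (!![a, b; c, d]).toEuclideanLin (pt u v) = pt (a * u + b * v) (c * u + d * v) := by
  ext i; fin_cases i <;> simp [pt, mul_comm]

lemma inner_pt (a b : ℝ) (x : ℝ²) : ⟪pt a b, x⟫ = a * x 0 + b * x 1 := by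
  simp [PiLp.inner_apply, Fin.sum_univ_two, mul_comm]

lemma mem_convexHull_pt_triple {x : ℝ²} {p₀ p₁ q₀ q₁ r₀ r₁ : ℝ} (a b c : ℝ)
    (ha : 0 ≤ a) (hb : 0 ≤ b) (hc : 0 ≤ c) (habc : a + b + c = 1)
    (h₀ : a * p₀ + b * q₀ + c * r₀ = x 0) (h₁ : a * p₁ + b * q₁ + c * r₁ = x 1) :
    x ∈ convexHull ℝ {pt p₀ p₁, pt q₀ q₁, pt r₀ r₁} :=
  mem_convexHull_triple_iff.2 ⟨a, b, c, ha, hb, hc, habc, by simp [h₀, h₁, pt_eta]⟩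

lemma disjoint_interior_convexHull_of_line {s t : Set ℝ²} (a b k : ℝ)
    (hab : a ≠ 0 ∨ b ≠ 0 := by norm_num)
    (hs : ∀ x ∈ s, a * x 0 + b * x 1 ≤ k := by norm_num)
    (ht : ∀ x ∈ t, k ≤ a * x 0 + b * x 1 := by norm_num) :
    Disjoint (interior (convexHull ℝ s)) (interior (convexHull ℝ t)) := by
  have hf : innerSL ℝ (pt a b) ≠ 0 := fun h => by
    have h' : pt a b = 0 := by simpa using congr($h (pt a b))
    rcases hab with hab | hab
    · exact hab (by simpa using congr($h' 0))
    · exact hab (by simpa using congr($h' 1))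
  exact disjoint_interior_convexHull_of_separated _ hf (by simpa [inner_pt] using hs)
    (by simpa [inner_pt] using ht)

lemma mem_Tri_iff {x : ℝ²} : x ∈ Tri ↔ 0 ≤ x 0 ∧ 0 ≤ x 1 ∧ x 0 + 2 * x 1 ≤ 2 := by
  constructor
  · rw [Tri, mem_convexHull_triple_iff]
    rintro ⟨a, b, c, ha, hb, hc, habc, rfl⟩
    simp only [smul_pt, pt_add_pt, pt_apply_zero, pt_apply_one]
    exact ⟨by linarith, by linarith, by linarith⟩
  · rintro ⟨h₀, h₁, h₂⟩
    exact mem_convexHull_pt_triple (1 - x 0 / 2 - x 1) (x 0 / 2) (x 1) (by linarith)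
      (by linarith) h₁ (by ring) (by ring) (by ring)

lemma convex_Tri : Convex ℝ Tri := convex_convexHull ℝ _

lemma Tsub_subset_Tri (i : Fin 5) : Tsub i ⊆ Tri := by
  fin_cases i <;>
    exact convex_Tri.convexHull_subset_iff.2 (by
      simp only [Set.insert_subset_iff, Set.singleton_subset_iff, mem_Tri_iff]; norm_num)

lemma Tri_subset_iUnion_Tsub : Tri ⊆ ⋃ i, Tsub i := by
  intro x hx
  obtain ⟨h₀, h₁, h₂⟩ := mem_Tri_iff.1 hx
  rw [Set.mem_iUnion]
  rcases le_or_gt (x 1) (2 * x 0) with h₃ | h₃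
  · rcases le_or_gt (x 0 + 2 * x 1) 1 with h₄ | h₄
    · exact ⟨0, mem_convexHull_pt_triple (1 - x 0 - 2 * x 1) (x 0 - x 1 / 2) (5 * x 1 / 2)
        (by linarith) (by linarith) (by linarith) (by ring) (by ring) (by ring)⟩
    rcases le_or_gt (4 * x 0 + 3 * x 1) 4 with h₅ | h₅
    · exact ⟨1, mem_convexHull_pt_triple (2 - 2 * x 0 - 3 * x 1 / 2) (x 0 - x 1 / 2)
        (x 0 + 2 * x 1 - 1) (by linarith) (by linarith) (by linarith) (by ring) (by ring)
        (by ring)⟩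
    rcases le_or_gt (2 * x 0 - x 1) 2 with h₆ | h₆
    · exact ⟨2, mem_convexHull_pt_triple (1 - x 0 + x 1 / 2) (2 - x 0 - 2 * x 1)
        (2 * x 0 + 3 * x 1 / 2 - 2) (by linarith) (by linarith) (by linarith) (by ring)
        (by ring) (by ring)⟩
    · exact ⟨4, mem_convexHull_pt_triple (2 - x 0 - 2 * x 1) (x 0 - x 1 / 2 - 1) (5 * x 1 / 2)
        (by linarith) (by linarith) (by linarith) (by ring) (by ring) (by ring)⟩
  · exact ⟨3, mem_convexHull_pt_triple (1 - x 1 - x 0 / 2) (x 1 - 2 * x 0) (5 * x 0 / 2)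
      (by linarith) (by linarith) (by linarith) (by ring) (by ring) (by ring)⟩

theorem Tri_eq_iUnion_Tsub : Tri = ⋃ i, Tsub i :=
  Tri_subset_iUnion_Tsub.antisymm (Set.iUnion_subset Tsub_subset_Tri)

theorem pairwise_disjoint_interior_Tsub :
    Pairwise fun i j => Disjoint (interior (Tsub i)) (interior (Tsub j)) := by
  refine (pairwise_disjoint_on fun i => interior (Tsub i)).2 ?_
  intro i j hij
  fin_cases i <;> fin_cases j <;> simp only [Fin.mk_lt_mk] at hij <;> (try omega) <;>
    simp only [Tsub]
  exacts [disjoint_interior_convexHull_of_line 1 2 1,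
    disjoint_interior_convexHull_of_line 1 2 1,
    disjoint_interior_convexHull_of_line (-2) 1 0,
    disjoint_interior_convexHull_of_line 2 (-1) 2,
    disjoint_interior_convexHull_of_line 4 3 4,
    disjoint_interior_convexHull_of_line (-2) 1 0,
    disjoint_interior_convexHull_of_line 2 (-1) 2,
    disjoint_interior_convexHull_of_line (-2) 1 0,
    disjoint_interior_convexHull_of_line 2 (-1) 2,
    disjoint_interior_convexHull_of_line 2 (-1) 0]

noncomputable def pinwheelLinear : Fin 5 → Matrix (Fin 2) (Fin 2) ℝ :=
  ![!![2/5, -1/5; -1/5, -2/5], !![2/5, 1/5; -1/5, 2/5], !![-2/5, -1/5; 1/5, -2/5],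
    !![-1/5, -2/5; -2/5, 1/5], !![2/5, -1/5; -1/5, -2/5]]

noncomputable def pinwheelShift : Fin 5 → ℝ² :=
  ![pt (1/5) (2/5), pt (1/5) (2/5), pt (6/5) (2/5), pt (2/5) (4/5), pt (6/5) (2/5)]

noncomputable def pinwheelMap (i : Fin 5) : ℝ² →ᵃ[ℝ] ℝ² :=
  (pinwheelLinear i).toEuclideanLin.toAffineMap + AffineMap.const ℝ ℝ² (pinwheelShift i)

lemma transpose_mul_pinwheelLinear (i : Fin 5) :
    (pinwheelLinear i).transpose * pinwheelLinear i = (√5)⁻¹ ^ 2 • 1 := by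
  rw [inv_pow, Real.sq_sqrt (by norm_num)]
  ext j k
  fin_cases i <;> fin_cases j <;> fin_cases k <;> norm_num [pinwheelLinear, Matrix.mul_apply]

lemma dist_pinwheelMap (i : Fin 5) (x y : ℝ²) :
    dist (pinwheelMap i x) (pinwheelMap i y) = dist x y / √5 := by
  rw [div_eq_inv_mul]
  exact dist_toEuclideanLin_add (by positivity) (transpose_mul_pinwheelLinear i) _ x y

lemma image_pinwheelMap_Tri (i : Fin 5) : pinwheelMap i '' Tri = Tsub i := by
  rw [Tri, AffineMap.image_convexHull]
  fin_cases i <;>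
    norm_num [Set.image_insert_eq, pinwheelMap, pinwheelLinear, pinwheelShift, Tsub] <;>
    congr 1 <;> ext <;> simp only [Set.mem_insert_iff, Set.mem_singleton_iff] <;> tauto

/-- The `1 : 2 : √5` right triangle `T` is partitioned into the five
triangles `T₁, …, T₅`: (i) `T` is their union; (ii) their interiors are pairwise
disjoint; (iii) each `Tᵢ` is the image of `T` under a similarity with ratio `1/√5`. -/
theorem stmt11 :
    (Tri = ⋃ i, Tsub i) ∧
    (Pairwise fun i j => Disjoint (interior (Tsub i)) (interior (Tsub j))) ∧
    (∀ i : Fin 5, ∃ f : EuclideanSpace ℝ (Fin 2) → EuclideanSpace ℝ (Fin 2),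
      (∀ x y, dist (f x) (f y) = dist x y / Real.sqrt 5) ∧ f '' Tri = Tsub i) :=
  ⟨Tri_eq_iUnion_Tsub, pairwise_disjoint_interior_Tsub,
    fun i => ⟨pinwheelMap i, dist_pinwheelMap i, image_pinwheelMap_Tri i⟩⟩
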